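/- Forward direction of the hardness reduction: Let G = (V, E_G) be a connected graph with no universal vertex whose edges are covered by k cliques Q₁, …, Q_k, and let G' be obtained from G by adding a clique U of k new vertices joined completely to V. Then G' is the half-square of a balanced bisplit bipartite graph. Concretely, the bipartite graph B = (V ∪ U, W₁ ∪ W₂, E_B) with W₁ = {w₁, …, w_k}, W₂ = {w_v : v ∈ V}, all edges between U and W₁ ∪ W₂, the perfect matching {v w_v : v ∈ V}, and edges v w_i whenever v ∈ Q_i, satisfies G' = B²[V ∪ U]. -/

import Mathlib

/-! Every new vertex of `U` is adjacent in `B` to all of `W₁ ∪ W₂`, so `U` is universal in the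
half-square. Two distinct old vertices never share a neighbour in `W₂`, and they share `wᵢ`
exactly when both lie in `Qᵢ`; since the `Qᵢ` are cliques covering the edges of `G`, this
happens exactly when they are adjacent in `G`. The bisplit structure is `X₁ = U`, `Y₁ = W₁`,
with the matching `v ↦ wᵥ`. -/

/-- The half-square of a bipartite graph given by an incidence relation `E : X → Y → Prop`:
two distinct vertices of `X` are adjacent iff they have a common neighbor in `Y`. -/
def halfSquare {X Y : Type*} (E : X → Y → Prop) : SimpleGraph X where
  Adj u v := u ≠ v ∧ ∃ y, E u y ∧ E v y
  symm := by
    refine ⟨?_⟩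
    rintro u v ⟨h, y, hu, hv⟩
    exact ⟨h.symm, y, hv, hu⟩
  loopless := by
    refine ⟨?_⟩
    rintro u ⟨h, -⟩
    exact h rfl

/-- `C` is a maximal clique of `G`. -/
def MaximalClique {V : Type*} (G : SimpleGraph V) (C : Set V) : Prop :=
  G.IsClique C ∧ ∀ D, G.IsClique D → C ⊆ D → D = C

/-- `G'` obtained from `G` by adding `k` new universal vertices: the new vertices form a
clique and are joined to all old vertices. -/
def addUniversal {V : Type*} (G : SimpleGraph V) (k : ℕ) : SimpleGraph (V ⊕ Fin k) where
  Adj a b := a ≠ b ∧ ∀ u v, a = Sum.inl u → b = Sum.inl v → G.Adj u v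
  symm := by
    refine ⟨?_⟩
    rintro a b ⟨hab, h⟩
    exact ⟨hab.symm, fun u v hb ha => (h v u ha hb).symm⟩
  loopless := by
    refine ⟨?_⟩
    rintro a ⟨h, -⟩
    exact h rfl

/-- A bipartite graph (given by incidence relation `E : X → Y → Prop`) is balanced bisplit:
`|X| = |Y|`, there is `X₁ ⊆ X` completely joined to `Y`, and the edges between
`X₂ = X \ X₁` and `Y₂ = Y \ Y₁` form a perfect matching of `X₂` onto `Y₂`. -/
def IsBalancedBisplit {X Y : Type*} [Fintype X] [Fintype Y] (E : X → Y → Prop) : Prop :=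
  Fintype.card X = Fintype.card Y ∧
  ∃ (X₁ : Set X) (Y₁ : Set Y),
    (∀ x ∈ X₁, ∀ y, E x y) ∧
    ∃ f : {x // x ∉ X₁} → {y // y ∉ Y₁}, Function.Bijective f ∧
      ∀ (x : {x // x ∉ X₁}) (y : {y // y ∉ Y₁}), (E x.val y.val ↔ f x = y)

/-- The incidence relation of the bipartite graph `B = (V ∪ U, W₁ ∪ W₂, E_B)` of the
reduction: all edges between `U = Fin k` and `W = W₁ ∪ W₂ = Fin k ⊕ V`, the perfect
matching `{v wᵥ : v ∈ V}`, and `v wᵢ` whenever `v ∈ Q i`. -/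
def reductionRel {V : Type} (k : ℕ) (Q : Fin k → Set V) :
    (V ⊕ Fin k) → (Fin k ⊕ V) → Prop
  | Sum.inl v, Sum.inl i => v ∈ Q i
  | Sum.inl v, Sum.inr v' => v = v'
  | Sum.inr _, _ => True

namespace Sum

variable {α β : Type*}

def complRangeInrEquiv : {x : α ⊕ β // x ∉ Set.range inr} ≃ α :=
  (Equiv.subtypeEquivRight fun x => by cases x <;> simp).trans Equiv.sumIsLeft

def complRangeInlEquiv : {x : α ⊕ β // x ∉ Set.range inl} ≃ β :=
  (Equiv.subtypeEquivRight fun x => by cases x <;> simp).trans Equiv.sumIsRight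

@[simp] lemma inl_complRangeInrEquiv (x : {x : α ⊕ β // x ∉ Set.range inr}) :
    inl (complRangeInrEquiv x) = x.1 := by
  obtain ⟨x | x, hx⟩ := x
  · rfl
  · simp at hx

@[simp] lemma inr_complRangeInlEquiv (x : {x : α ⊕ β // x ∉ Set.range inl}) :
    inr (complRangeInlEquiv x) = x.1 := by
  obtain ⟨x | x, hx⟩ := x
  · simp at hx
  · rfl

end Sum

open Sum in
theorem isBalancedBisplit_of_sum {A U W : Type*} [Fintype A] [Fintype U] [Fintype W]
    (hcard : Fintype.card U = Fintype.card W) (E : A ⊕ U → W ⊕ A → Prop)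
    (hU : ∀ u y, E (inr u) y) (hmatch : ∀ a a', E (inl a) (inr a') ↔ a = a') :
    IsBalancedBisplit E := by
  refine ⟨by simp [hcard, add_comm], Set.range inr, Set.range inl, ?_,
    complRangeInrEquiv.trans complRangeInlEquiv.symm, Equiv.bijective _, fun x y => ?_⟩
  · rintro _ ⟨u, rfl⟩ y
    exact hU u y
  · rw [Equiv.trans_apply, Equiv.symm_apply_eq, ← inl_complRangeInrEquiv x,
      ← inr_complRangeInlEquiv y, hmatch]

theorem halfSquare_reductionRel {V : Type} (G : SimpleGraph V) (k : ℕ) (Q : Fin k → Set V)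
    (hQ : ∀ i, G.IsClique (Q i)) (hcover : ∀ u v, G.Adj u v → ∃ i, u ∈ Q i ∧ v ∈ Q i) :
    halfSquare (reductionRel k Q) = addUniversal G k := by
  ext a b
  constructor
  · rintro ⟨hab, y, ha, hb⟩
    refine ⟨hab, ?_⟩
    rintro u v rfl rfl
    rcases y with i | w
    · exact hQ i ha hb (ne_of_apply_ne Sum.inl hab)
    · exact absurd (ha.trans hb.symm) (ne_of_apply_ne Sum.inl hab)
  · rintro ⟨hab, hG⟩
    refine ⟨hab, ?_⟩
    rcases a with u | i <;> rcases b with v | j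
    · obtain ⟨i, hu, hv⟩ := hcover u v (hG u v rfl rfl)
      exact ⟨.inl i, hu, hv⟩
    · exact ⟨.inr u, rfl, trivial⟩
    · exact ⟨.inr v, trivial, rfl⟩
    · exact ⟨.inl i, trivial, trivial⟩

theorem stmt_3_general {V : Type} [Fintype V] (G : SimpleGraph V) (k : ℕ)
    (Q : Fin k → Set V) (hQ : ∀ i, G.IsClique (Q i))
    (hcover : ∀ u v, G.Adj u v → ∃ i, u ∈ Q i ∧ v ∈ Q i) :
    IsBalancedBisplit (reductionRel k Q) ∧
    halfSquare (reductionRel k Q) = addUniversal G k :=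
  ⟨isBalancedBisplit_of_sum rfl _ (fun _ _ => trivial) fun _ _ => Iff.rfl,
    halfSquare_reductionRel G k Q hQ hcover⟩

/-- Forward direction of the reduction: if the edges of a connected graph `G` with no
universal vertex are covered by `k` cliques `Q₁, …, Q_k`, then the bipartite graph
`B` of the reduction is balanced bisplit and `G' = B²[V ∪ U]`. -/
theorem stmt_3 {V : Type} [Fintype V] (G : SimpleGraph V) (k : ℕ)
    (hconn : G.Connected)
    (huniv : ¬ ∃ v : V, ∀ u, u ≠ v → G.Adj v u)
    (Q : Fin k → Set V) (hQ : ∀ i, G.IsClique (Q i))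
    (hcover : ∀ u v, G.Adj u v → ∃ i, u ∈ Q i ∧ v ∈ Q i) :
    IsBalancedBisplit (reductionRel k Q) ∧
    halfSquare (reductionRel k Q) = addUniversal G k :=
  stmt_3_general G k Q hQ hcover
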